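/- Let (V,d) be a compact length space, ε > 0, and f, u : V → ℝ continuous. If −Δ∞^ε u(x) ≤ f(x) for all x ∈ V, then c_f(ε) ≥ 0. Similarly, if −Δ∞^ε u(x) ≥ f(x) for all x ∈ V, then c_f(ε) ≤ 0. -/

import Mathlib

/-! Rescale a subsolution to `v = (2/ε²)(u - max u)`: then `v ≤ T v + f` for the one-step
operator `T v x = (sup_{B(x,ε)} v + inf_{B(x,ε)} v)/2`, and `v ≤ 0`. As `T` is monotone,
induction gives `v ≤ u_n` for every game value `u_n`, so `u_n` is bounded below while
`u_n - n c` is bounded, forcing `c ≥ 0`. The supersolution case is the subsolution case for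
`(-f, -u, -c)`, since `T` commutes with negation. -/

open Set Filter Topology
open scoped ENNReal Classical

/-- Tug-of-war game values on the graph with adjacency relation `adj`, running payoff `f`
and terminal payoff `u₀`:
`u_{n+1}(x) = (1/2)(sup_{y∼x} u_n(y) + inf_{y∼x} u_n(y)) + f(x)`. -/
noncomputable def gameVal {V : Type*} (adj : V → V → Prop) (f u₀ : V → ℝ) : ℕ → V → ℝ
  | 0 => u₀
  | n + 1 => fun x =>
      (sSup (gameVal adj f u₀ n '' {y | adj x y}) +
        sInf (gameVal adj f u₀ n '' {y | adj x y})) / 2 + f x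

/-- `c` is Player I's long term advantage for running payoff `f`: the game values with
terminal payoff `0` satisfy that `(u_n - n·c)` is uniformly bounded. -/
def IsLTA {V : Type*} (adj : V → V → Prop) (f : V → ℝ) (c : ℝ) : Prop :=
  ∃ C : ℝ, ∀ (n : ℕ) (x : V), |gameVal adj f (fun _ => (0:ℝ)) n x - n * c| ≤ C

/-- `ReachesIn adj n x y`: there is a walk of length exactly `n` from `x` to `y`. -/
def ReachesIn {V : Type*} (adj : V → V → Prop) : ℕ → V → V → Prop
  | 0 => fun x y => x = y
  | n + 1 => fun x y => ∃ z, adj x z ∧ ReachesIn adj n z y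

/-- A compact length space: the (extended) distance between two points is the infimum of
the lengths (total variations) of continuous paths joining them. -/
def IsLengthSpace (V : Type*) [MetricSpace V] : Prop :=
  ∀ x y : V, edist x y = ⨅ γ : Path x y, eVariationOn (fun t => γ t) (Set.univ : Set unitInterval)

/-- The `ε`-discrete infinity Laplacian
`Δ∞^ε u(x) = (max_{B(x,ε)} u + min_{B(x,ε)} u − 2u(x))/ε²`. -/
noncomputable def discLap {V : Type*} [MetricSpace V] (ε : ℝ) (u : V → ℝ) (x : V) : ℝ :=
  (sSup (u '' {y | dist x y ≤ ε}) + sInf (u '' {y | dist x y ≤ ε}) - 2 * u x) / ε ^ 2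

section TugOfWar

variable {V : Type*} {adj : V → V → Prop}

noncomputable def tugStep (adj : V → V → Prop) (v : V → ℝ) (x : V) : ℝ :=
  (sSup (v '' {y | adj x y}) + sInf (v '' {y | adj x y})) / 2

theorem gameVal_succ (f u₀ : V → ℝ) (n : ℕ) (x : V) :
    gameVal adj f u₀ (n + 1) x = tugStep adj (gameVal adj f u₀ n) x + f x := rfl

theorem tugStep_neg (v : V → ℝ) : tugStep adj (-v) = -tugStep adj v := by
  ext x
  simp only [tugStep, Pi.neg_apply]
  rw [← Set.image_image Neg.neg v, Set.image_neg_eq_neg, Real.sSup_neg, Real.sInf_neg]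
  ring

theorem tugStep_smul {c : ℝ} (hc : 0 ≤ c) (v : V → ℝ) :
    tugStep adj (c • v) = c • tugStep adj v := by
  ext x
  simp only [tugStep, Pi.smul_apply]
  rw [← Set.image_image (c • ·) v, Set.image_smul, Real.sSup_smul_of_nonneg hc,
    Real.sInf_smul_of_nonneg hc, smul_eq_mul, smul_eq_mul, smul_eq_mul]
  ring

theorem tugStep_const (hne : ∀ x, {y | adj x y}.Nonempty) (C : ℝ) :
    tugStep adj (fun _ => C) = fun _ => C := by
  ext x
  simp [tugStep, (hne x).image_const]

theorem tugStep_add_const (hne : ∀ x, {y | adj x y}.Nonempty) {v : V → ℝ}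
    (hv : Bornology.IsBounded (range v)) (C : ℝ) :
    tugStep adj (fun y => v y + C) = fun x => tugStep adj v x + C := by
  ext x
  have hS : (v '' {y | adj x y}).Nonempty := (hne x).image v
  have hsup := (OrderIso.addRight C).map_csSup' hS (hv.bddAbove.mono (image_subset_range _ _))
  have hinf := (OrderIso.addRight C).map_csInf' hS (hv.bddBelow.mono (image_subset_range _ _))
  simp only [OrderIso.addRight_apply, Set.image_image] at hsup hinf
  simp only [tugStep, ← hsup, ← hinf]
  ring

theorem tugStep_mono (hne : ∀ x, {y | adj x y}.Nonempty) {a b : V → ℝ} (hab : a ≤ b)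
    (ha : BddBelow (range a)) (hb : BddAbove (range b)) : tugStep adj a ≤ tugStep adj b := by
  intro x
  have hsup : sSup (a '' {y | adj x y}) ≤ sSup (b '' {y | adj x y}) :=
    csSup_le ((hne x).image a) <| forall_mem_image.2 fun y hy =>
      (hab y).trans (le_csSup (hb.mono (image_subset_range _ _)) (mem_image_of_mem b hy))
  have hinf : sInf (a '' {y | adj x y}) ≤ sInf (b '' {y | adj x y}) :=
    le_csInf ((hne x).image b) <| forall_mem_image.2 fun y hy =>
      (csInf_le (ha.mono (image_subset_range _ _)) (mem_image_of_mem a hy)).trans (hab y)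
  simp only [tugStep]
  linarith

theorem isBounded_range_tugStep (hne : ∀ x, {y | adj x y}.Nonempty) {v : V → ℝ}
    (hv : Bornology.IsBounded (range v)) : Bornology.IsBounded (range (tugStep adj v)) := by
  obtain ⟨m, hm⟩ := hv.bddBelow
  obtain ⟨M, hM⟩ := hv.bddAbove
  refine BddBelow.isBounded ⟨m, forall_mem_range.2 fun x => ?_⟩
    ⟨M, forall_mem_range.2 fun x => ?_⟩
  · simpa only [tugStep_const hne] using tugStep_mono (adj := adj) hne
      (fun y => hm (mem_range_self y)) (bddBelow_singleton.mono range_const_subset) hv.bddAbove x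
  · simpa only [tugStep_const hne] using tugStep_mono (adj := adj) hne
      (fun y => hM (mem_range_self y)) hv.bddBelow (bddAbove_singleton.mono range_const_subset) x

theorem isBounded_range_gameVal (hne : ∀ x, {y | adj x y}.Nonempty) {f u₀ : V → ℝ}
    (hf : Bornology.IsBounded (range f)) (hu₀ : Bornology.IsBounded (range u₀)) (n : ℕ) :
    Bornology.IsBounded (range (gameVal adj f u₀ n)) := by
  induction n with
  | zero => exact hu₀
  | succ n ih =>
    have hT := isBounded_range_tugStep hne ih
    exact BddBelow.isBounded (hT.bddBelow.range_add hf.bddBelow) (hT.bddAbove.range_add hf.bddAbove)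

theorem gameVal_neg (f u₀ : V → ℝ) (n : ℕ) :
    gameVal adj (-f) (-u₀) n = -gameVal adj f u₀ n := by
  induction n with
  | zero => rfl
  | succ n ih =>
    ext x
    simp only [gameVal_succ, Pi.neg_apply, ih, tugStep_neg, neg_add]

theorem IsLTA.neg {f : V → ℝ} {c : ℝ} (hc : IsLTA adj f c) : IsLTA adj (-f) (-c) := by
  obtain ⟨C, hC⟩ := hc
  refine ⟨C, fun n x => ?_⟩
  have h := gameVal_neg (adj := adj) f (fun _ => 0) n
  rw [show -(fun _ : V => (0 : ℝ)) = fun _ => 0 from neg_zero] at h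
  rw [h, Pi.neg_apply, ← abs_neg]
  convert hC n x using 2
  ring

theorem le_gameVal_of_le_tugStep (hne : ∀ x, {y | adj x y}.Nonempty) {f u₀ v : V → ℝ}
    (hf : Bornology.IsBounded (range f)) (hu₀ : Bornology.IsBounded (range u₀))
    (hv : BddBelow (range v)) (hsub : ∀ x, v x ≤ tugStep adj v x + f x) (hvu₀ : v ≤ u₀)
    (n : ℕ) : v ≤ gameVal adj f u₀ n := by
  induction n with
  | zero => exact hvu₀
  | succ n ih =>
    intro x
    rw [gameVal_succ]
    have hT := tugStep_mono hne ih hv (isBounded_range_gameVal hne hf hu₀ n).bddAbove x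
    linarith [hsub x]

theorem IsLTA.nonneg_of_le_gameVal {f : V → ℝ} {c : ℝ} (hc : IsLTA adj f c) {K : ℝ} {x : V}
    (hK : ∀ n, K ≤ gameVal adj f (fun _ => 0) n x) : 0 ≤ c := by
  obtain ⟨C, hC⟩ := hc
  by_contra! hneg
  obtain ⟨n, hn⟩ := exists_nat_gt ((C - K) / -c)
  rw [div_lt_iff₀ (neg_pos.2 hneg)] at hn
  linarith [(abs_le.1 (hC n x)).2, hK n]

end TugOfWar

section DiscreteLaplacian

variable {V : Type*} [MetricSpace V] {ε : ℝ}

theorem discLap_neg (u : V → ℝ) (x : V) : discLap ε (-u) x = -discLap ε u x := by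
  simp only [discLap, Pi.neg_apply]
  rw [← Set.image_image Neg.neg u, Set.image_neg_eq_neg, Real.sSup_neg, Real.sInf_neg]
  ring

theorem tugStep_dist_le_eq_add_discLap (hε : ε ≠ 0) (u : V → ℝ) (x : V) :
    tugStep (fun a b => dist a b ≤ ε) u x = u x + ε ^ 2 / 2 * discLap ε u x := by
  unfold tugStep discLap
  field_simp
  ring

theorem nonneg_of_isLTA_of_neg_discLap_le [CompactSpace V] [Nonempty V] (hε : 0 < ε)
    {f u : V → ℝ} (hf : Continuous f) (hu : Continuous u)
    (hsub : ∀ x, -discLap ε u x ≤ f x)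
    {c : ℝ} (hc : IsLTA (fun a b => dist a b ≤ ε) f c) : 0 ≤ c := by
  have hne : ∀ x : V, {y | dist x y ≤ ε}.Nonempty := fun x => ⟨x, by simpa using hε.le⟩
  obtain ⟨M, hM⟩ := (isCompact_range hu).bddAbove
  have ha : 0 ≤ 2 / ε ^ 2 := by positivity
  set v : V → ℝ := (2 / ε ^ 2) • fun x => u x + -M
  have hv_nonpos : v ≤ 0 := fun x =>
    mul_nonpos_of_nonneg_of_nonpos ha (by linarith [hM (mem_range_self x)])
  have hv_sub : ∀ x, v x ≤ tugStep (fun a b => dist a b ≤ ε) v x + f x := by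
    intro x
    rw [tugStep_smul ha, tugStep_add_const hne (isCompact_range hu).isBounded]
    simp only [v, Pi.smul_apply, smul_eq_mul, tugStep_dist_le_eq_add_discLap hε.ne']
    have hrescale : 2 / ε ^ 2 * (u x + ε ^ 2 / 2 * discLap ε u x + -M)
        = 2 / ε ^ 2 * (u x + -M) + discLap ε u x := by
      field_simp
      ring
    linarith [hsub x]
  obtain ⟨K, hK⟩ := (isCompact_range (by fun_prop : Continuous v)).bddBelow
  exact hc.nonneg_of_le_gameVal (x := Classical.arbitrary V) fun n =>
    (hK (mem_range_self _)).trans <| le_gameVal_of_le_tugStep hne (isCompact_range hf).isBounded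
      (isCompact_range continuous_const).isBounded ⟨K, hK⟩ hv_sub hv_nonpos n _

end DiscreteLaplacian

theorem subsolution_sign_of_advantage_general {V : Type*} [MetricSpace V] [CompactSpace V]
    [Nonempty V] (ε : ℝ) (hε : 0 < ε)
    (f u : V → ℝ) (hf : Continuous f) (hu : Continuous u) :
    ((∀ x : V, -discLap ε u x ≤ f x) →
      ∀ c : ℝ, IsLTA (fun a b => dist a b ≤ ε) f c → 0 ≤ c) ∧
    ((∀ x : V, f x ≤ -discLap ε u x) →
      ∀ c : ℝ, IsLTA (fun a b => dist a b ≤ ε) f c → c ≤ 0) := by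
  refine ⟨fun hsub c hc => nonneg_of_isLTA_of_neg_discLap_le hε hf hu hsub hc,
    fun hsup c hc => ?_⟩
  have hsub : ∀ x, -discLap ε (-u) x ≤ (-f) x := fun x => by
    rw [discLap_neg, neg_neg, Pi.neg_apply, le_neg]
    exact hsup x
  exact neg_nonneg.1 (nonneg_of_isLTA_of_neg_discLap_le hε hf.neg hu.neg hsub hc.neg)

/-- On a compact length space, if a continuous `u` satisfies
`−Δ∞^ε u ≤ f` everywhere then `c_f(ε) ≥ 0`; if `−Δ∞^ε u ≥ f` everywhere then
`c_f(ε) ≤ 0`. -/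
theorem subsolution_sign_of_advantage {V : Type*} [MetricSpace V] [CompactSpace V]
    [Nonempty V] (hV : IsLengthSpace V) (ε : ℝ) (hε : 0 < ε)
    (f u : V → ℝ) (hf : Continuous f) (hu : Continuous u) :
    ((∀ x : V, -discLap ε u x ≤ f x) →
      ∀ c : ℝ, IsLTA (fun a b => dist a b ≤ ε) f c → 0 ≤ c) ∧
    ((∀ x : V, f x ≤ -discLap ε u x) →
      ∀ c : ℝ, IsLTA (fun a b => dist a b ≤ ε) f c → c ≤ 0) :=
  subsolution_sign_of_advantage_general ε hε f u hf hu
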